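/- arXiv:2501.05642 — 2 statements merged into one kernel-verified Lean document; each statement's English description precedes it below -/
import Mathlib

section
/- Suppose Σ_{i=1}^{N−1} c_i² ≤ 1. For every η > 0, the gradient of w ↦ Q(w;η) is Lipschitz continuous on ℝ^{Nn} with Lipschitz constant L(η) = 2λ_max(AᵀA) + (Σ_{i=1}^{N−1} c_i² + 1)/(2η); that is, ‖∇Q(w;η) − ∇Q(w';η)‖ ≤ L(η)‖w − w'‖ for all w, w' ∈ ℝ^{Nn}. -/
open scoped BigOperators InnerProductSpace

noncomputable section

/-- Block space `ℝ^{Nn}` with `N = K+1` blocks of size `n`, with the Euclidean norm. -/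
abbrev Blk (K n : ℕ) : Type := PiLp 2 fun _ : Fin (K + 1) => EuclideanSpace ℝ (Fin n)

/-- `Dmap c w = w_N − Σ_{i=1}^{N−1} c_i w_i`. -/
def Dmap {K n : ℕ} (c : Fin K → ℝ) (w : Blk K n) : EuclideanSpace ℝ (Fin n) :=
  w (Fin.last K) - ∑ i : Fin K, c i • w i.castSucc

/-- `f(w) = Σ_i ‖A w_i − b_i‖²`. -/
def fobj {K m n : ℕ} (A : Matrix (Fin m) (Fin n) ℝ) (b : Blk K m) (w : Blk K n) : ℝ :=
  ∑ i : Fin (K + 1), ‖Matrix.toEuclideanLin A (w i) - b i‖ ^ 2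

/-- `F(w) = f(w) − (1/2)‖A(Dw) − Db‖²`. -/
def Fobj {K m n : ℕ} (A : Matrix (Fin m) (Fin n) ℝ) (b : Blk K m) (c : Fin K → ℝ)
    (w : Blk K n) : ℝ :=
  fobj A b w - (1 / 2) * ‖Matrix.toEuclideanLin A (Dmap c w) - Dmap c b‖ ^ 2

/-- The quadratic penalty function `Q(w;η) = F(w) + (1/(4η))‖Dw‖²`. -/
def Qpen {K m n : ℕ} (A : Matrix (Fin m) (Fin n) ℝ) (b : Blk K m) (c : Fin K → ℝ)
    (η : ℝ) (w : Blk K n) : ℝ :=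
  Fobj A b c w + (1 / (4 * η)) * ‖Dmap c w‖ ^ 2

/-- The adjoint `Dᵀ` of `Dmap`, given blockwise by `(Dᵀu)_i = −c_i u` for `i < N` and
`(Dᵀu)_N = u`. -/
def DmapT {K n : ℕ} (c : Fin K → ℝ) (u : EuclideanSpace ℝ (Fin n)) : Blk K n :=
  WithLp.toLp 2 (Fin.snoc (α := fun _ => EuclideanSpace ℝ (Fin n)) (fun i : Fin K => -(c i) • u) u)

section aux
variable {E F : Type*} [NormedAddCommGroup E] [InnerProductSpace ℝ E] [CompleteSpace E]
  [NormedAddCommGroup F] [InnerProductSpace ℝ F] [CompleteSpace F]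

lemma hasGradientAt_sqnorm (B : E →L[ℝ] F) (y : F) (x : E) :
    HasGradientAt (fun w => ‖B w - y‖ ^ 2)
      ((2 : ℝ) • ((ContinuousLinearMap.adjoint B) (B x - y))) x := by
  have hB : HasFDerivAt (fun w : E => B w - y) (B : E →L[ℝ] F) x := B.hasFDerivAt.sub_const y
  have h := hB.inner ℝ hB
  have hfun : (fun w : E => (inner ℝ (B w - y) (B w - y) : ℝ)) = fun w => ‖B w - y‖ ^ 2 := by
    funext w; rw [real_inner_self_eq_norm_sq]
  rw [hfun] at h
  rw [hasGradientAt_iff_hasFDerivAt]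
  refine h.congr_fderiv ?_
  ext t
  simp only [InnerProductSpace.toDual_apply_apply, real_inner_smul_left,
    ContinuousLinearMap.adjoint_inner_left, ContinuousLinearMap.coe_comp', Function.comp_apply,
    fderivInnerCLM_apply, ContinuousLinearMap.prod_apply]
  rw [real_inner_comm (B t) (B x - y)]
  ring

lemma HasGradientAt.add' {f g : E → ℝ} {gf gg : E} {x : E}
    (hf : HasGradientAt f gf x) (hg : HasGradientAt g gg x) :
    HasGradientAt (fun w => f w + g w) (gf + gg) x := by
  rw [hasGradientAt_iff_hasFDerivAt] at *
  simpa [map_add] using hf.fun_add hg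

lemma hasGradientAt_const_mul' {f : E → ℝ} {gf : E} {x : E} (r : ℝ)
    (hf : HasGradientAt f gf x) :
    HasGradientAt (fun w => r * f w) (r • gf) x := by
  rw [hasGradientAt_iff_hasFDerivAt] at *
  simpa [map_smul] using hf.const_mul r

lemma hasGradientAt_sum' {ι : Type*} (s : Finset ι) {f : ι → E → ℝ} {gf : ι → E} {x : E}
    (h : ∀ i ∈ s, HasGradientAt (f i) (gf i) x) :
    HasGradientAt (fun w => ∑ i ∈ s, f i w) (∑ i ∈ s, gf i) x := by
  rw [hasGradientAt_iff_hasFDerivAt]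
  have := HasFDerivAt.fun_sum (fun i hi => (h i hi).hasFDerivAt)
  simpa [map_sum] using this

lemma cs_aux {F : Type*} [NormedAddCommGroup F] [NormedSpace ℝ F] {K : ℕ}
    (c : Fin K → ℝ) (hc : ∀ i, 0 ≤ c i) (v : Fin (K + 1) → F) :
    ‖v (Fin.last K) - ∑ i : Fin K, c i • v i.castSucc‖ ^ 2
      ≤ ((∑ i, c i ^ 2) + 1) * ∑ i : Fin (K + 1), ‖v i‖ ^ 2 := by
  set d : Fin (K + 1) → ℝ := Fin.snoc c 1 with hd
  have h1 : ‖v (Fin.last K) - ∑ i : Fin K, c i • v i.castSucc‖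
      ≤ ∑ i : Fin (K + 1), d i * ‖v i‖ := by
    rw [Fin.sum_univ_castSucc]
    simp only [hd, Fin.snoc_castSucc, Fin.snoc_last, one_mul]
    calc ‖v (Fin.last K) - ∑ i : Fin K, c i • v i.castSucc‖
        ≤ ‖∑ i : Fin K, c i • v i.castSucc‖ + ‖v (Fin.last K)‖ := by
          rw [sub_eq_add_neg, add_comm]; exact (norm_add_le _ _).trans (by simp)
      _ ≤ (∑ i : Fin K, c i * ‖v i.castSucc‖) + ‖v (Fin.last K)‖ := by
          gcongr
          refine (norm_sum_le _ _).trans ?_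
          refine Finset.sum_le_sum fun i _ => ?_
          rw [norm_smul, Real.norm_eq_abs, abs_of_nonneg (hc i)]
  have h2 := Finset.sum_mul_sq_le_sq_mul_sq Finset.univ d (fun i => ‖v i‖)
  have h3 : ∑ i : Fin (K + 1), d i ^ 2 = (∑ i, c i ^ 2) + 1 := by
    rw [Fin.sum_univ_castSucc]; simp [hd]
  have h4 : 0 ≤ ∑ i : Fin (K + 1), d i * ‖v i‖ :=
    le_trans (norm_nonneg _) h1
  have h5 : ‖v (Fin.last K) - ∑ i : Fin K, c i • v i.castSucc‖ ^ 2
      ≤ (∑ i : Fin (K + 1), d i * ‖v i‖) ^ 2 := by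
    exact pow_le_pow_left₀ (norm_nonneg _) h1 2
  calc ‖v (Fin.last K) - ∑ i : Fin K, c i • v i.castSucc‖ ^ 2
      ≤ (∑ i : Fin (K + 1), d i * ‖v i‖) ^ 2 := h5
    _ ≤ (∑ i : Fin (K + 1), d i ^ 2) * ∑ i : Fin (K + 1), ‖v i‖ ^ 2 := h2
    _ = ((∑ i, c i ^ 2) + 1) * ∑ i : Fin (K + 1), ‖v i‖ ^ 2 := by rw [h3]

end aux

lemma quadform_le {m n : ℕ} (A : Matrix (Fin m) (Fin n) ℝ) (lam : ℝ)
    (hlam : ∀ μ ∈ spectrum ℝ (A.transpose * A), μ ≤ lam) (x : EuclideanSpace ℝ (Fin n)) :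
    ‖Matrix.toEuclideanLin A x‖ ^ 2 ≤ lam * ‖x‖ ^ 2 := by
  have hM : (A.transpose * A).IsHermitian := by
    have := Matrix.isHermitian_conjTranspose_mul_self A
    rwa [Matrix.conjTranspose_eq_transpose_of_trivial] at this
  set B := hM.eigenvectorBasis with hB
  set μ := hM.eigenvalues with hμdef
  have hμ : ∀ i, μ i ≤ lam := fun i => hlam _ (hM.eigenvalues_mem_spectrum_real i)
  -- S (B j) = μ j • B j
  have hSB : ∀ j, Matrix.toEuclideanLin (A.transpose * A) (B j) = μ j • B j := by
    intro j
    have h := hM.mulVec_eigenvectorBasis j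
    apply PiLp.ext
    intro k
    have := congrFun h k
    simpa [Matrix.toEuclideanLin_apply] using this
  -- ‖A x‖² = ⟪x, S x⟫
  have hAx : ‖Matrix.toEuclideanLin A x‖ ^ 2
      = ⟪x, Matrix.toEuclideanLin (A.transpose * A) x⟫_ℝ := by
    have hcomp : Matrix.toEuclideanLin (A.transpose * A) x
        = Matrix.toEuclideanLin A.transpose (Matrix.toEuclideanLin A x) := by
      apply PiLp.ext
      intro k
      simp [Matrix.toEuclideanLin_apply, ← Matrix.mulVec_mulVec]
    rw [hcomp, ← Matrix.conjTranspose_eq_transpose_of_trivial,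
      Matrix.toEuclideanLin_conjTranspose_eq_adjoint, LinearMap.adjoint_inner_right,
      real_inner_self_eq_norm_sq]
  rw [hAx]
  -- expand in eigenbasis
  have hSx : Matrix.toEuclideanLin (A.transpose * A) x
      = ∑ j, (B.repr x j * μ j) • B j := by
    conv_lhs => rw [← B.sum_repr x]
    rw [map_sum]
    refine Finset.sum_congr rfl fun j _ => ?_
    rw [map_smul, hSB j, smul_smul]
  rw [hSx, inner_sum]
  have hterm : ∀ j, ⟪x, (B.repr x j * μ j) • B j⟫_ℝ = μ j * (B.repr x j) ^ 2 := by
    intro j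
    rw [real_inner_smul_right, real_inner_comm, ← B.repr_apply_apply]
    ring
  simp_rw [hterm]
  have hpar : ∑ j, (B.repr x j) ^ 2 = ‖x‖ ^ 2 := by
    have h := B.sum_inner_mul_inner x x
    have : ∀ j, ⟪x, B j⟫_ℝ * ⟪B j, x⟫_ℝ = (B.repr x j) ^ 2 := by
      intro j
      have e : ⟪B j, x⟫_ℝ = B.repr x j := (B.repr_apply_apply x j).symm
      have e2 : ⟪x, B j⟫_ℝ = B.repr x j := by rw [real_inner_comm]; exact e
      rw [e, e2]; ring
    simp_rw [this] at h
    rw [h, real_inner_self_eq_norm_sq]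
  calc ∑ j, μ j * (B.repr x j) ^ 2 ≤ ∑ j, lam * (B.repr x j) ^ 2 := by
        refine Finset.sum_le_sum fun j _ => ?_
        exact mul_le_mul_of_nonneg_right (hμ j) (sq_nonneg _)
    _ = lam * ‖x‖ ^ 2 := by rw [← Finset.mul_sum, hpar]

lemma op_bound {E : Type*} [NormedAddCommGroup E] [InnerProductSpace ℝ E]
    (T : E →L[ℝ] E) (L : ℝ)
    (hsym : ∀ u v : E, ⟪T u, v⟫_ℝ = ⟪T v, u⟫_ℝ)
    (hpsd : ∀ u : E, 0 ≤ ⟪T u, u⟫_ℝ)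
    (hub : ∀ u : E, ⟪T u, u⟫_ℝ ≤ L * ‖u‖ ^ 2) (u : E) :
    ‖T u‖ ≤ L * ‖u‖ := by
  have hTcs : ∀ x y : E, ⟪T x, y⟫_ℝ ^ 2 ≤ ⟪T x, x⟫_ℝ * ⟪T y, y⟫_ℝ := by
    intro x y
    have key : ∀ t : ℝ, 0 ≤ ⟪T y, y⟫_ℝ * (t * t) + (2 * ⟪T x, y⟫_ℝ) * t + ⟪T x, x⟫_ℝ := by
      intro t
      have h0 := hpsd (x + t • y)
      have hexp : ⟪T (x + t • y), x + t • y⟫_ℝ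
          = ⟪T y, y⟫_ℝ * (t * t) + (2 * ⟪T x, y⟫_ℝ) * t + ⟪T x, x⟫_ℝ := by
        rw [map_add, ContinuousLinearMap.map_smul]
        simp only [inner_add_left, inner_add_right, real_inner_smul_left, real_inner_smul_right]
        rw [hsym y x]
        ring
      rw [hexp] at h0
      exact h0
    have hd := discrim_le_zero key
    rw [discrim] at hd
    have h4 : (2 * ⟪T x, y⟫_ℝ) ^ 2 = 4 * ⟪T x, y⟫_ℝ ^ 2 := by ring
    rw [h4] at hd
    linarith
  by_cases hu0 : u = 0
  · simp [hu0]
  · have hunz : 0 < ‖u‖ := norm_pos_iff.mpr hu0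
    have hL0 : 0 ≤ L := by
      have h1 := hpsd u
      have h2 := hub u
      have hsq : (0:ℝ) < ‖u‖ ^ 2 := by positivity
      by_contra hneg
      push_neg at hneg
      have := mul_neg_of_neg_of_pos hneg hsq
      linarith
    by_cases hTu0 : T u = 0
    · rw [hTu0]
      simp only [norm_zero]
      positivity
    · have hTunz : 0 < ‖T u‖ := norm_pos_iff.mpr hTu0
      have hcs := hTcs u (T u)
      rw [real_inner_self_eq_norm_sq] at hcs
      have h2 := hub u
      have h3 := hub (T u)
      have h5 := hpsd (T u)
      have step1 : ‖T u‖ ^ 2 * ‖T u‖ ^ 2 ≤ (L * ‖u‖ ^ 2) * (L * ‖T u‖ ^ 2) := by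
        calc ‖T u‖ ^ 2 * ‖T u‖ ^ 2 = (‖T u‖ ^ 2) ^ 2 := by ring
          _ ≤ ⟪T u, u⟫_ℝ * ⟪T (T u), T u⟫_ℝ := hcs
          _ ≤ (L * ‖u‖ ^ 2) * ⟪T (T u), T u⟫_ℝ := mul_le_mul_of_nonneg_right h2 h5
          _ ≤ (L * ‖u‖ ^ 2) * (L * ‖T u‖ ^ 2) := by
              refine mul_le_mul_of_nonneg_left h3 ?_
              positivity
      have step2 : ‖T u‖ ^ 2 ≤ L ^ 2 * ‖u‖ ^ 2 := by
        have hpos : (0:ℝ) < ‖T u‖ ^ 2 := by positivity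
        have hre : (L * ‖u‖ ^ 2) * (L * ‖T u‖ ^ 2) = (L ^ 2 * ‖u‖ ^ 2) * ‖T u‖ ^ 2 := by ring
        rw [hre] at step1
        exact le_of_mul_le_mul_right step1 hpos
      nlinarith [step2, hL0, norm_nonneg (T u), norm_nonneg u, mul_nonneg hL0 (norm_nonneg u),
        sq_nonneg (‖T u‖ + L * ‖u‖), sq_nonneg (‖T u‖ - L * ‖u‖)]

set_option maxHeartbeats 1000000 in
/-- If `Σ c_i² ≤ 1`, then `∇Q(·;η)` is Lipschitz with constant
`L(η) = 2λ_max(AᵀA) + (Σ c_i² + 1)/(2η)`. -/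
theorem stmt7 {K m n : ℕ} (A : Matrix (Fin m) (Fin n) ℝ) (b : Blk K m)
    (c : Fin K → ℝ) (hc : ∀ i, 0 ≤ c i) (hc1 : ∑ i, c i ^ 2 ≤ 1)
    (lam : ℝ) (hlam : IsGreatest (spectrum ℝ (A.transpose * A)) lam)
    (η : ℝ) (hη : 0 < η) :
    ∀ w w' : Blk K n,
      ‖gradient (Qpen A b c η) w - gradient (Qpen A b c η) w'‖
        ≤ (2 * lam + ((∑ i, c i ^ 2) + 1) / (2 * η)) * ‖w - w'‖ := by
  intro w w'
  set σ : ℝ := ∑ i, c i ^ 2 with hσ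
  set L : ℝ := 2 * lam + (σ + 1) / (2 * η) with hL
  -- continuous linear maps
  set AL : EuclideanSpace ℝ (Fin n) →L[ℝ] EuclideanSpace ℝ (Fin m) :=
    LinearMap.toContinuousLinearMap (Matrix.toEuclideanLin A) with hAL
  set P : Fin (K + 1) → (Blk K n →L[ℝ] EuclideanSpace ℝ (Fin n)) :=
    fun i => PiLp.proj 2 _ i with hP
  set DL : Blk K n →L[ℝ] EuclideanSpace ℝ (Fin n) :=
    P (Fin.last K) - ∑ i : Fin K, c i • P i.castSucc with hDLdef
  have hDL : ∀ u : Blk K n, DL u = Dmap c u := by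
    intro u
    simp [hDLdef, Dmap, hP]
  set Bi : Fin (K + 1) → (Blk K n →L[ℝ] EuclideanSpace ℝ (Fin m)) :=
    fun i => AL.comp (P i) with hBi
  set BD : Blk K n →L[ℝ] EuclideanSpace ℝ (Fin m) := AL.comp DL with hBD
  set Db : EuclideanSpace ℝ (Fin m) := Dmap c b with hDb
  have hALapp : ∀ x, AL x = Matrix.toEuclideanLin A x := fun x => rfl
  have hBiapp : ∀ i (u : Blk K n), Bi i u = Matrix.toEuclideanLin A (u i) := by
    intro i u; rfl
  have hBDapp : ∀ u : Blk K n, BD u = Matrix.toEuclideanLin A (Dmap c u) := by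
    intro u; rw [hBD]; simp [hDL u]; rfl
  -- Qpen as sum of squared norms of affine maps
  have hQdef : (Qpen A b c η : Blk K n → ℝ) = fun u =>
      (∑ i, ‖Bi i u - b i‖ ^ 2) +
        ((-(1 / 2)) * ‖BD u - Db‖ ^ 2 + (1 / (4 * η)) * ‖DL u - 0‖ ^ 2) := by
    funext u
    rw [Qpen, Fobj, fobj]
    simp only [hBiapp, hBDapp, hDL, sub_zero]
    ring
  -- gradient formula
  set Gr : Blk K n → Blk K n := fun x =>
    (∑ i, (2 : ℝ) • (ContinuousLinearMap.adjoint (Bi i)) (Bi i x - b i)) +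
      (((-(1 / 2) : ℝ)) • ((2 : ℝ) • (ContinuousLinearMap.adjoint BD) (BD x - Db)) +
        (1 / (4 * η)) • ((2 : ℝ) • (ContinuousLinearMap.adjoint DL) (DL x - 0))) with hGr
  have hGrad : ∀ x, HasGradientAt (Qpen A b c η) (Gr x) x := by
    intro x
    have h1 : HasGradientAt (fun u : Blk K n => ∑ i, ‖Bi i u - b i‖ ^ 2)
        (∑ i, (2 : ℝ) • (ContinuousLinearMap.adjoint (Bi i)) (Bi i x - b i)) x :=
      hasGradientAt_sum' _ (fun i _ => hasGradientAt_sqnorm _ _ _)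
    have h2 := hasGradientAt_const_mul' (-(1 / 2)) (hasGradientAt_sqnorm BD Db x)
    have h3 := hasGradientAt_const_mul' (1 / (4 * η)) (hasGradientAt_sqnorm DL 0 x)
    have := h1.add' (h2.add' h3)
    rw [hQdef]
    simpa only [hGr] using this
  have hgw : gradient (Qpen A b c η) w = Gr w := (hGrad w).gradient
  have hgw' : gradient (Qpen A b c η) w' = Gr w' := (hGrad w').gradient
  -- the linear operator T
  set T : Blk K n →L[ℝ] Blk K n :=
    (∑ i, (2 : ℝ) • ((ContinuousLinearMap.adjoint (Bi i)).comp (Bi i)))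
      - (ContinuousLinearMap.adjoint BD).comp BD
      + (1 / (2 * η)) • ((ContinuousLinearMap.adjoint DL).comp DL) with hT
  have e1 : ∀ i : Fin (K + 1),
      (2 : ℝ) • (ContinuousLinearMap.adjoint (Bi i)) (Bi i w - b i)
        - (2 : ℝ) • (ContinuousLinearMap.adjoint (Bi i)) (Bi i w' - b i)
      = (2 : ℝ) • (ContinuousLinearMap.adjoint (Bi i)) (Bi i (w - w')) := by
    intro i
    rw [← smul_sub, ← map_sub, sub_sub_sub_cancel_right, ← map_sub]
  have e2 : (-(1 / 2) : ℝ) • ((2 : ℝ) • (ContinuousLinearMap.adjoint BD) (BD w - Db))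
        - (-(1 / 2) : ℝ) • ((2 : ℝ) • (ContinuousLinearMap.adjoint BD) (BD w' - Db))
      = -((ContinuousLinearMap.adjoint BD) (BD (w - w'))) := by
    rw [← smul_sub, ← smul_sub, ← map_sub, sub_sub_sub_cancel_right, ← map_sub, smul_smul]
    norm_num
  have e3 : (1 / (4 * η)) • ((2 : ℝ) • (ContinuousLinearMap.adjoint DL) (DL w - 0))
        - (1 / (4 * η)) • ((2 : ℝ) • (ContinuousLinearMap.adjoint DL) (DL w' - 0))
      = (1 / (2 * η)) • (ContinuousLinearMap.adjoint DL) (DL (w - w')) := by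
    rw [sub_zero, sub_zero, ← smul_sub, ← smul_sub, ← map_sub, ← map_sub, smul_smul]
    congr 1
    field_simp
    ring
  have hsplit : ∀ a a' e f e' f' : Blk K n,
      (a + (e + f)) - (a' + (e' + f')) = (a - a') + ((e - e') + (f - f')) := by
    intros; abel
  have hdiff : Gr w - Gr w' = T (w - w') := by
    simp only [hGr, hT]
    rw [hsplit, ← Finset.sum_sub_distrib, Finset.sum_congr rfl (fun i _ => e1 i), e2, e3]
    simp only [ContinuousLinearMap.sub_apply, ContinuousLinearMap.add_apply,
      ContinuousLinearMap.sum_apply, ContinuousLinearMap.smul_apply,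
      ContinuousLinearMap.coe_comp', Function.comp_apply]
    abel
  -- quadratic form of T
  have hBiAL : ∀ (i : Fin (K + 1)) (u : Blk K n), Bi i u = AL (u i) := fun i u => rfl
  have hform : ∀ u v : Blk K n, ⟪T u, v⟫_ℝ
      = 2 * (∑ i, ⟪Bi i u, Bi i v⟫_ℝ) - ⟪BD u, BD v⟫_ℝ + (1 / (2 * η)) * ⟪DL u, DL v⟫_ℝ := by
    intro u v
    simp only [hT, ContinuousLinearMap.add_apply, ContinuousLinearMap.sub_apply,
      ContinuousLinearMap.sum_apply, ContinuousLinearMap.smul_apply,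
      ContinuousLinearMap.coe_comp', Function.comp_apply]
    rw [inner_add_left, inner_sub_left, sum_inner]
    simp only [real_inner_smul_left, ContinuousLinearMap.adjoint_inner_left]
    rw [Finset.mul_sum]
  have hsymTuv : ∀ u v : Blk K n, ⟪T u, v⟫_ℝ = ⟪T v, u⟫_ℝ := by
    intro u v
    rw [hform, hform]
    rw [Finset.sum_congr rfl fun i _ => real_inner_comm (Bi i u) (Bi i v),
      real_inner_comm (BD u) (BD v), real_inner_comm (DL u) (DL v)]
  -- norm facts
  have fact3 : ∀ u : Blk K n, ∑ i, ‖u i‖ ^ 2 = ‖u‖ ^ 2 :=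
    fun u => (PiLp.norm_sq_eq_of_L2 _ u).symm
  have fact4 : ∀ x : EuclideanSpace ℝ (Fin n), ‖AL x‖ ^ 2 ≤ lam * ‖x‖ ^ 2 := by
    intro x
    rw [hALapp]
    exact quadform_le A lam (fun μ hμ => hlam.2 hμ) x
  have factBD : ∀ u : Blk K n, ‖BD u‖ ^ 2 ≤ (σ + 1) * ∑ i, ‖AL (u i)‖ ^ 2 := by
    intro u
    have hrepr : BD u = AL (u (Fin.last K)) - ∑ i : Fin K, c i • AL (u i.castSucc) := by
      rw [hBD]
      simp only [ContinuousLinearMap.coe_comp', Function.comp_apply, hDL, Dmap, map_sub, map_sum,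
        map_smul]
    rw [hrepr, hσ]
    exact cs_aux c hc (fun i => AL (u i))
  have factDL : ∀ u : Blk K n, ‖DL u‖ ^ 2 ≤ (σ + 1) * ∑ i, ‖u i‖ ^ 2 := by
    intro u
    rw [hDL, Dmap, hσ]
    exact cs_aux c hc u
  have hη2 : (0:ℝ) < 1 / (2 * η) := by positivity
  -- positivity of the quadratic form
  have hTpsd : ∀ u : Blk K n, 0 ≤ ⟪T u, u⟫_ℝ := by
    intro u
    rw [hform]
    have h1 : ∀ i : Fin (K + 1), ⟪Bi i u, Bi i u⟫_ℝ = ‖AL (u i)‖ ^ 2 := by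
      intro i; rw [real_inner_self_eq_norm_sq, hBiAL]
    rw [Finset.sum_congr rfl fun i _ => h1 i, real_inner_self_eq_norm_sq,
      real_inner_self_eq_norm_sq]
    have hs0 : (0:ℝ) ≤ ∑ i, ‖AL (u i)‖ ^ 2 :=
      Finset.sum_nonneg fun i _ => sq_nonneg _
    have hBDb : ‖BD u‖ ^ 2 ≤ 2 * ∑ i, ‖AL (u i)‖ ^ 2 := by
      refine (factBD u).trans ?_
      have : σ + 1 ≤ 2 := by linarith
      nlinarith
    have hDLb : (0:ℝ) ≤ 1 / (2 * η) * ‖DL u‖ ^ 2 := by positivity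
    linarith
  -- upper bound of the quadratic form
  have hTub : ∀ u : Blk K n, ⟪T u, u⟫_ℝ ≤ L * ‖u‖ ^ 2 := by
    intro u
    rw [hform]
    have h1 : ∀ i : Fin (K + 1), ⟪Bi i u, Bi i u⟫_ℝ = ‖AL (u i)‖ ^ 2 := by
      intro i; rw [real_inner_self_eq_norm_sq, hBiAL]
    rw [Finset.sum_congr rfl fun i _ => h1 i, real_inner_self_eq_norm_sq,
      real_inner_self_eq_norm_sq]
    have hsum : ∑ i, ‖AL (u i)‖ ^ 2 ≤ lam * ‖u‖ ^ 2 := by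
      calc ∑ i, ‖AL (u i)‖ ^ 2 ≤ ∑ i, lam * ‖u i‖ ^ 2 :=
            Finset.sum_le_sum fun i _ => fact4 (u i)
        _ = lam * ∑ i, ‖u i‖ ^ 2 := by rw [Finset.mul_sum]
        _ = lam * ‖u‖ ^ 2 := by rw [fact3]
    have hDLb : 1 / (2 * η) * ‖DL u‖ ^ 2 ≤ 1 / (2 * η) * ((σ + 1) * ‖u‖ ^ 2) := by
      refine mul_le_mul_of_nonneg_left ?_ (le_of_lt hη2)
      calc ‖DL u‖ ^ 2 ≤ (σ + 1) * ∑ i, ‖u i‖ ^ 2 := factDL u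
        _ = (σ + 1) * ‖u‖ ^ 2 := by rw [fact3]
    have hBD0 : (0:ℝ) ≤ ‖BD u‖ ^ 2 := sq_nonneg _
    have hLrw : L * ‖u‖ ^ 2 = 2 * (lam * ‖u‖ ^ 2) + 1 / (2 * η) * ((σ + 1) * ‖u‖ ^ 2) := by
      rw [hL]; field_simp
    linarith
  rw [hgw, hgw', hdiff]
  exact op_bound T L hsymTuv hTpsd hTub (w - w')
end
end

section
/- Suppose Σ_{i=1}^{N−1} c_i² ≤ 1, A ≠ 0, and 0 < η ≤ (2 − Σ_{i=1}^{N−1} c_i²)/(4λ_max(AᵀA)). Let (u*, μ*) satisfy the KKT conditions for min{F(w) : w ≥ 0, Dw = 0}: u* ≥ 0, Du* = 0, and ∇F(u*) + Dᵀμ* ∈ −N_{≥0}(u*), where N_{≥0}(u*) is the normal cone of the nonnegative orthant at u*. If u is an η-optimal solution of min_{w≥0} Q(w;η), then ‖Du‖ ≤ 2η(2‖μ*‖ + √C), where C = (5/2)√(Nn)‖u − u*‖ + √(Nn)‖∇F(u*)‖η + Nn η². -/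
open scoped BigOperators InnerProductSpace

noncomputable section

namespace S16
variable {K m n : ℕ}

def DLin (c : Fin K → ℝ) : Blk K n →ₗ[ℝ] EuclideanSpace ℝ (Fin n) where
  toFun w := Dmap c w
  map_add' x y := by
    simp only [Dmap, PiLp.add_apply, smul_add, Finset.sum_add_distrib]
    abel
  map_smul' r x := by
    simp only [Dmap, PiLp.smul_apply, RingHom.id_apply, smul_sub, Finset.smul_sum]
    congr 1
    exact Finset.sum_congr rfl fun i _ => (smul_comm r (c i) _).symm

def DL (c : Fin K → ℝ) : Blk K n →L[ℝ] EuclideanSpace ℝ (Fin n) :=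
  haveI : ContinuousSMul ℝ (Blk K n) := inferInstance
  (DLin c).toContinuousLinearMap

@[simp] lemma DL_apply (c : Fin K → ℝ) (w : Blk K n) : DL c w = Dmap c w := rfl

def TL (A : Matrix (Fin m) (Fin n) ℝ) : EuclideanSpace ℝ (Fin n) →L[ℝ] EuclideanSpace ℝ (Fin m) :=
  (Matrix.toEuclideanLin A : EuclideanSpace ℝ (Fin n) →ₗ[ℝ] EuclideanSpace ℝ (Fin m)).toContinuousLinearMap

@[simp] lemma TL_apply (A : Matrix (Fin m) (Fin n) ℝ) (x) : TL A x = Matrix.toEuclideanLin A x := rfl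

def TBlin (A : Matrix (Fin m) (Fin n) ℝ) : Blk K n →ₗ[ℝ] Blk K m where
  toFun w := WithLp.toLp 2 fun i => Matrix.toEuclideanLin A (w i)
  map_add' x y := by ext i : 1; simp [PiLp.add_apply]
  map_smul' r x := by ext i : 1; simp [PiLp.smul_apply]

def TB (A : Matrix (Fin m) (Fin n) ℝ) : Blk K n →L[ℝ] Blk K m :=
  haveI : ContinuousSMul ℝ (Blk K n) := inferInstance
  haveI : ContinuousSMul ℝ (Blk K m) := inferInstance
  (TBlin (K := K) A).toContinuousLinearMap

@[simp] lemma TB_apply (A : Matrix (Fin m) (Fin n) ℝ) (w : Blk K n) (i) :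
    TB A w i = Matrix.toEuclideanLin A (w i) := rfl

variable {V W : Type*} [NormedAddCommGroup V] [InnerProductSpace ℝ V] [CompleteSpace V]
  [NormedAddCommGroup W] [InnerProductSpace ℝ W] [CompleteSpace W]

lemma hasGrad_sq (L : W →L[ℝ] V) (v : V) (w : W) :
    HasGradientAt (fun x => ‖L x - v‖ ^ 2)
      ((2:ℝ) • (ContinuousLinearMap.adjoint L) (L w - v)) w := by
  have hf : HasFDerivAt (fun x : W => L x - v) (L : W →L[ℝ] V) w :=
    (L.hasFDerivAt).sub_const v
  have h := (hf.inner ℝ hf)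
  rw [hasGradientAt_iff_hasFDerivAt]
  have heq : (fun x : W => ‖L x - v‖ ^ 2) = fun x : W => ⟪L x - v, L x - v⟫_ℝ := by
    funext x; rw [real_inner_self_eq_norm_sq]
  rw [heq]
  refine h.congr_fderiv ?_
  apply ContinuousLinearMap.ext
  intro y
  simp only [InnerProductSpace.toDual_apply_apply, fderivInnerCLM_apply,
    ContinuousLinearMap.comp_apply, ContinuousLinearMap.prod_apply]
  rw [real_inner_smul_left, ContinuousLinearMap.adjoint_inner_left]
  rw [real_inner_comm (L y) (L w - v)]
  ring

lemma hga_sub {f g : W → ℝ} {fg gg : W} {x : W} (hf : HasGradientAt f fg x)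
    (hg : HasGradientAt g gg x) : HasGradientAt (fun y => f y - g y) (fg - gg) x := by
  rw [hasGradientAt_iff_hasFDerivAt] at *
  rw [map_sub]; exact hf.sub hg

lemma hga_add {f g : W → ℝ} {fg gg : W} {x : W} (hf : HasGradientAt f fg x)
    (hg : HasGradientAt g gg x) : HasGradientAt (fun y => f y + g y) (fg + gg) x := by
  rw [hasGradientAt_iff_hasFDerivAt] at *
  rw [map_add]; exact hf.add hg

lemma hga_const_mul {f : W → ℝ} {fg : W} {x : W} (r : ℝ) (hf : HasGradientAt f fg x) :
    HasGradientAt (fun y => r * f y) (r • fg) x := by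
  rw [hasGradientAt_iff_hasFDerivAt] at *
  simpa [map_smul] using hf.const_mul r

lemma inner_DmapT (c : Fin K → ℝ) (z : EuclideanSpace ℝ (Fin n)) (w : Blk K n) :
    ⟪DmapT c z, w⟫_ℝ = ⟪z, Dmap c w⟫_ℝ := by
  rw [PiLp.inner_apply, Fin.sum_univ_castSucc]
  simp only [DmapT, Fin.snoc_castSucc, Fin.snoc_last, Dmap, inner_sub_right, inner_sum,
    real_inner_smul_left, real_inner_smul_right, neg_smul, inner_neg_left]
  rw [Finset.sum_neg_distrib]
  ring

lemma adjoint_DL (c : Fin K → ℝ) (z : EuclideanSpace ℝ (Fin n)) :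
    ContinuousLinearMap.adjoint (DL (n := n) c) z = DmapT c z := by
  apply ext_inner_right ℝ
  intro w
  rw [ContinuousLinearMap.adjoint_inner_left, inner_DmapT, DL_apply]

variable {A : Matrix (Fin m) (Fin n) ℝ} {b : Blk K m} {c : Fin K → ℝ} {η : ℝ}

def GF (A : Matrix (Fin m) (Fin n) ℝ) (b : Blk K m) (c : Fin K → ℝ) (w : Blk K n) : Blk K n :=
  (2:ℝ) • (ContinuousLinearMap.adjoint (TB (K := K) A)) (TB A w - b)
    - (ContinuousLinearMap.adjoint ((TL A).comp (DL c))) (((TL A).comp (DL c)) w - Dmap c b)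

def GQ (A : Matrix (Fin m) (Fin n) ℝ) (b : Blk K m) (c : Fin K → ℝ) (η : ℝ)
    (w : Blk K n) : Blk K n :=
  GF A b c w + (η⁻¹ / 2) • DmapT c (Dmap c w)

lemma fobj_eq (w : Blk K n) : fobj A b w = ‖TB (K := K) A w - b‖ ^ 2 := by
  rw [PiLp.norm_sq_eq_of_L2]
  simp [fobj, PiLp.sub_apply]

lemma Fobj_eq : Fobj A b c =
    fun w : Blk K n => ‖TB (K := K) A w - b‖ ^ 2
      - (1/2) * ‖((TL A).comp (DL c)) w - Dmap c b‖ ^ 2 := by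
  funext w
  rw [Fobj, fobj_eq]
  norm_num

lemma hasGradF (w : Blk K n) : HasGradientAt (Fobj A b c) (GF A b c w) w := by
  rw [Fobj_eq]
  have h2 := hga_const_mul (1/2 : ℝ) (hasGrad_sq ((TL A).comp (DL c)) (Dmap c b) w)
  have h := hga_sub (hasGrad_sq (TB (K := K) A) b w) h2
  have e : (1/2 : ℝ) • ((2:ℝ) • (ContinuousLinearMap.adjoint ((TL A).comp (DL c)))
      (((TL A).comp (DL c)) w - Dmap c b)) =
      (ContinuousLinearMap.adjoint ((TL A).comp (DL c))) (((TL A).comp (DL c)) w - Dmap c b) := by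
    rw [smul_smul]; norm_num
  rw [e] at h
  exact h

lemma hasGradQ (hη : η ≠ 0) (w : Blk K n) : HasGradientAt (Qpen A b c η) (GQ A b c η w) w := by
  have hq : Qpen A b c η = fun w : Blk K n =>
      Fobj A b c w + (1/(4*η)) * ‖DL c w - 0‖ ^ 2 := by
    funext w'; simp [Qpen]
  rw [hq]
  have h2 := hga_const_mul (1/(4*η) : ℝ) (hasGrad_sq (DL c) 0 w)
  have h := hga_add (f := Fobj A b c) (hasGradF w) h2
  have e : (1/(4*η) : ℝ) • ((2:ℝ) • (ContinuousLinearMap.adjoint (DL (n := n) c))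
      (DL c w - 0)) = (η⁻¹ / 2) • DmapT c (Dmap c w) := by
    rw [sub_zero, adjoint_DL, smul_smul, DL_apply]
    congr 1
    field_simp
    ring
  rw [e] at h
  exact h

lemma gradF_eq (w : Blk K n) : gradient (Fobj A b c) w = GF A b c w :=
  (hasGradF w).gradient

lemma gradQ_eq (hη : η ≠ 0) (w : Blk K n) : gradient (Qpen A b c η) w = GQ A b c η w :=
  (hasGradQ hη w).gradient

def Hop (A : Matrix (Fin m) (Fin n) ℝ) (c : Fin K → ℝ) : Blk K n →L[ℝ] Blk K n :=
  (2:ℝ) • ((ContinuousLinearMap.adjoint (TB (K := K) A)).comp (TB A))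
    - (ContinuousLinearMap.adjoint ((TL A).comp (DL c))).comp ((TL A).comp (DL c))

lemma GF_sub (u us : Blk K n) : GF A b c u - GF A b c us = Hop A c (u - us) := by
  simp only [GF, Hop, ContinuousLinearMap.sub_apply, ContinuousLinearMap.smul_apply,
    ContinuousLinearMap.comp_apply, map_sub, smul_sub]
  abel

lemma inner_Hop (v w : Blk K n) :
    ⟪Hop A c v, w⟫_ℝ = 2 * ⟪TB (K := K) A v, TB A w⟫_ℝ
      - ⟪TL A (Dmap c v), TL A (Dmap c w)⟫_ℝ := by
  simp only [Hop, ContinuousLinearMap.sub_apply, ContinuousLinearMap.smul_apply,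
    ContinuousLinearMap.comp_apply, inner_sub_left, real_inner_smul_left,
    ContinuousLinearMap.adjoint_inner_left, DL_apply]

lemma key_cs (hc : ∀ i, 0 ≤ c i) (hc1 : ∑ i, c i ^ 2 ≤ 1)
    {V : Type*} [NormedAddCommGroup V] [NormedSpace ℝ V] (x : Fin (K+1) → V) :
    ‖x (Fin.last K) - ∑ i : Fin K, c i • x i.castSucc‖ ^ 2 ≤ 2 * ∑ i, ‖x i‖ ^ 2 := by
  set d : Fin (K+1) → ℝ := Fin.snoc c 1 with hd
  have h1 : ‖x (Fin.last K) - ∑ i : Fin K, c i • x i.castSucc‖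
      ≤ ∑ i : Fin (K+1), d i * ‖x i‖ := by
    rw [Fin.sum_univ_castSucc]
    simp only [hd, Fin.snoc_castSucc, Fin.snoc_last, one_mul]
    refine le_trans (norm_sub_le _ _) ?_
    rw [add_comm]
    gcongr
    refine le_trans (norm_sum_le _ _) ?_
    refine Finset.sum_le_sum fun i _ => ?_
    rw [norm_smul, Real.norm_eq_abs, abs_of_nonneg (hc i)]
  have h2 : (∑ i : Fin (K+1), d i * ‖x i‖) ^ 2
      ≤ (∑ i : Fin (K+1), d i ^ 2) * ∑ i, ‖x i‖ ^ 2 :=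
    Finset.sum_mul_sq_le_sq_mul_sq _ _ _
  have h3 : (∑ i : Fin (K+1), d i ^ 2) ≤ 2 := by
    rw [Fin.sum_univ_castSucc]
    simp only [hd, Fin.snoc_castSucc, Fin.snoc_last, one_pow]
    linarith
  have h4 : ‖x (Fin.last K) - ∑ i : Fin K, c i • x i.castSucc‖ ^ 2
      ≤ (∑ i : Fin (K+1), d i * ‖x i‖) ^ 2 := by
    apply pow_le_pow_left₀ (norm_nonneg _) h1
  refine h4.trans (h2.trans ?_)
  have hnn : (0:ℝ) ≤ ∑ i, ‖x i‖ ^ 2 := Finset.sum_nonneg fun i _ => sq_nonneg _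
  nlinarith

lemma norm_sq_TB (v : Blk K n) : ‖TB (K := K) A v‖ ^ 2 = ∑ i, ‖Matrix.toEuclideanLin A (v i)‖ ^ 2 := by
  rw [PiLp.norm_sq_eq_of_L2]
  rfl

lemma Dmap_norm_sq_le (hc : ∀ i, 0 ≤ c i) (hc1 : ∑ i, c i ^ 2 ≤ 1) (v : Blk K n) :
    ‖Dmap c v‖ ^ 2 ≤ 2 * ‖v‖ ^ 2 := by
  have h := key_cs hc hc1 (fun i => v i)
  have e : (2:ℝ) * ∑ i, ‖v i‖ ^ 2 = 2 * ‖v‖ ^ 2 := by rw [PiLp.norm_sq_eq_of_L2]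
  rw [e] at h
  exact h

lemma DmapT_norm_sq_le (hc : ∀ i, 0 ≤ c i) (hc1 : ∑ i, c i ^ 2 ≤ 1)
    (z : EuclideanSpace ℝ (Fin n)) : ‖DmapT c z‖ ^ 2 ≤ 2 * ‖z‖ ^ 2 := by
  rw [PiLp.norm_sq_eq_of_L2, Fin.sum_univ_castSucc]
  simp only [DmapT, Fin.snoc_castSucc, Fin.snoc_last, norm_smul, Real.norm_eq_abs,
    abs_neg, abs_of_nonneg (hc _), mul_pow]
  rw [← Finset.sum_mul]
  nlinarith [sq_nonneg ‖z‖]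

lemma norm_toEuc_sq (M : Matrix (Fin m) (Fin n) ℝ) (x : EuclideanSpace ℝ (Fin n)) :
    ‖Matrix.toEuclideanLin M x‖ ^ 2
      = ⟪Matrix.toEuclideanLin (M.conjTranspose * M) x, x⟫_ℝ := by
  have hmul : Matrix.toEuclideanLin (M.conjTranspose * M) x
      = Matrix.toEuclideanLin M.conjTranspose (Matrix.toEuclideanLin M x) := by
    simp only [Matrix.toEuclideanLin_apply, Equiv.apply_symm_apply, Matrix.mulVec_mulVec]
  rw [hmul, Matrix.toEuclideanLin_conjTranspose_eq_adjoint, LinearMap.adjoint_inner_left,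
    real_inner_self_eq_norm_sq]

lemma rayleigh (M : Matrix (Fin m) (Fin n) ℝ) {lam : ℝ}
    (hlam : IsGreatest (spectrum ℝ (M.transpose * M)) lam) (x : EuclideanSpace ℝ (Fin n)) :
    ‖Matrix.toEuclideanLin M x‖ ^ 2 ≤ lam * ‖x‖ ^ 2 := by
  have htr : M.transpose * M = M.conjTranspose * M := by
    rw [Matrix.conjTranspose_eq_transpose_of_trivial]
  rw [htr] at hlam
  have hS : (M.conjTranspose * M).IsHermitian := Matrix.isHermitian_conjTranspose_mul_self M
  set B := hS.eigenvectorBasis with hB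
  have hSB : ∀ i, Matrix.toEuclideanLin (M.conjTranspose * M) (B i) = hS.eigenvalues i • B i := by
    intro i
    have h1 := hS.mulVec_eigenvectorBasis i
    ext j
    exact congrFun h1 j
  have hsym : ∀ v w : EuclideanSpace ℝ (Fin n),
      ⟪Matrix.toEuclideanLin (M.conjTranspose * M) v, w⟫_ℝ = ⟪v, Matrix.toEuclideanLin (M.conjTranspose * M) w⟫_ℝ := by
    intro v w
    have hmul : ∀ z : EuclideanSpace ℝ (Fin n), Matrix.toEuclideanLin (M.conjTranspose * M) z
        = Matrix.toEuclideanLin M.conjTranspose (Matrix.toEuclideanLin M z) := by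
      intro z
      simp only [Matrix.toEuclideanLin_apply, Equiv.apply_symm_apply, Matrix.mulVec_mulVec]
    rw [hmul, hmul, Matrix.toEuclideanLin_conjTranspose_eq_adjoint, LinearMap.adjoint_inner_left,
      LinearMap.adjoint_inner_right]
  rw [norm_toEuc_sq]
  have hexp : ⟪Matrix.toEuclideanLin (M.conjTranspose * M) x, x⟫_ℝ
      = ∑ i, hS.eigenvalues i * (⟪B i, x⟫_ℝ * ⟪B i, x⟫_ℝ) := by
    rw [← B.sum_inner_mul_inner (Matrix.toEuclideanLin (M.conjTranspose * M) x) x]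
    refine Finset.sum_congr rfl fun i _ => ?_
    rw [hsym, hSB i, real_inner_smul_right, real_inner_comm x (B i)]
    ring
  rw [hexp]
  have hx : ∑ i, (⟪B i, x⟫_ℝ * ⟪B i, x⟫_ℝ) = ‖x‖ ^ 2 := by
    rw [← real_inner_self_eq_norm_sq, ← B.sum_inner_mul_inner x x]
    refine Finset.sum_congr rfl fun i _ => by rw [real_inner_comm x (B i)]
  calc ∑ i, hS.eigenvalues i * (⟪B i, x⟫_ℝ * ⟪B i, x⟫_ℝ)
      ≤ ∑ i, lam * (⟪B i, x⟫_ℝ * ⟪B i, x⟫_ℝ) := by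
        refine Finset.sum_le_sum fun i _ => ?_
        exact mul_le_mul_of_nonneg_right (hlam.2 (hS.eigenvalues_mem_spectrum_real i))
          (mul_self_nonneg _)
    _ = lam * ‖x‖ ^ 2 := by rw [← Finset.mul_sum, hx]

lemma lam_pos {M : Matrix (Fin m) (Fin n) ℝ} (hA : M ≠ 0) {lam : ℝ}
    (hlam : IsGreatest (spectrum ℝ (M.transpose * M)) lam) : 0 < lam := by
  have hx : ∃ x : EuclideanSpace ℝ (Fin n), Matrix.toEuclideanLin M x ≠ 0 := by
    by_contra h
    push_neg at h
    apply hA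
    apply Matrix.toEuclideanLin.injective
    ext x : 1
    simp [h]
  obtain ⟨x, hx⟩ := hx
  have h1 := rayleigh M hlam x
  have h2 : 0 < ‖Matrix.toEuclideanLin M x‖ ^ 2 := pow_pos (norm_pos_iff.mpr hx) 2
  have h3 : 0 < ‖x‖ ^ 2 := by
    have hxx : x ≠ 0 := by rintro rfl; simp at hx
    exact pow_pos (norm_pos_iff.mpr hxx) 2
  nlinarith

lemma quad_expand {V : Type*} [NormedAddCommGroup V] [InnerProductSpace ℝ V]
    (a b : V) (t : ℝ) :
    ⟪a + t • b, a + t • b⟫_ℝ = ⟪a,a⟫_ℝ + 2*t*⟪a,b⟫_ℝ + t^2*⟪b,b⟫_ℝ := by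
  simp only [inner_add_add_self, real_inner_smul_left, real_inner_smul_right]
  rw [real_inner_comm b a]
  ring

lemma TLD_eq (v : Blk K n) :
    TL A (Dmap c v) = (fun i => Matrix.toEuclideanLin A (v i)) (Fin.last K)
      - ∑ i : Fin K, c i • (fun i => Matrix.toEuclideanLin A (v i)) i.castSucc := by
  simp only [TL_apply, Dmap, map_sub, map_sum, map_smul]

lemma Hop_self_nonneg (hc : ∀ i, 0 ≤ c i) (hc1 : ∑ i, c i ^ 2 ≤ 1) (v : Blk K n) :
    0 ≤ ⟪Hop A c v, v⟫_ℝ := by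
  rw [inner_Hop, real_inner_self_eq_norm_sq, real_inner_self_eq_norm_sq]
  have h1 : ‖TL A (Dmap c v)‖ ^ 2 ≤ 2 * ∑ i, ‖Matrix.toEuclideanLin A (v i)‖ ^ 2 := by
    rw [TLD_eq]
    exact key_cs hc hc1 (fun i => Matrix.toEuclideanLin A (v i))
  rw [norm_sq_TB]
  linarith

lemma Hop_self_le {lam : ℝ} (hlam : IsGreatest (spectrum ℝ (A.transpose * A)) lam)
    (v : Blk K n) : ⟪Hop A c v, v⟫_ℝ ≤ 2 * lam * ‖v‖ ^ 2 := by
  rw [inner_Hop, real_inner_self_eq_norm_sq, real_inner_self_eq_norm_sq, norm_sq_TB]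
  have h1 : ∑ i, ‖Matrix.toEuclideanLin A (v i)‖ ^ 2 ≤ lam * ‖v‖ ^ 2 := by
    have : ∀ i : Fin (K+1), ‖Matrix.toEuclideanLin A (v i)‖ ^ 2 ≤ lam * ‖v i‖ ^ 2 :=
      fun i => rayleigh A hlam (v i)
    calc ∑ i, ‖Matrix.toEuclideanLin A (v i)‖ ^ 2 ≤ ∑ i, lam * ‖v i‖ ^ 2 :=
          Finset.sum_le_sum fun i _ => this i
      _ = lam * ‖v‖ ^ 2 := by rw [← Finset.mul_sum, PiLp.norm_sq_eq_of_L2]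
  nlinarith [sq_nonneg ‖TL A (Dmap c v)‖]

lemma Hop_cs (hc : ∀ i, 0 ≤ c i) (hc1 : ∑ i, c i ^ 2 ≤ 1) (v w : Blk K n) :
    ⟪Hop A c v, w⟫_ℝ ^ 2 ≤ ⟪Hop A c v, v⟫_ℝ * ⟪Hop A c w, w⟫_ℝ := by
  have hquad : ∀ t : ℝ, 0 ≤ ⟪Hop A c w, w⟫_ℝ * (t*t) + (2*⟪Hop A c v, w⟫_ℝ) * t
      + ⟪Hop A c v, v⟫_ℝ := by
    intro t
    have h0 := Hop_self_nonneg (A := A) hc hc1 (v + t • w)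
    have e1 : TB (K := K) A (v + t • w) = TB A v + t • TB A w := by
      rw [map_add, map_smul]
    have e2 : TL A (Dmap c (v + t • w)) = TL A (Dmap c v) + t • TL A (Dmap c w) := by
      rw [← DL_apply c (v + t • w), map_add, map_smul, map_add, map_smul, DL_apply, DL_apply]
    have hexp : ⟪Hop A c (v + t • w), v + t • w⟫_ℝ
        = ⟪Hop A c w, w⟫_ℝ * (t*t) + (2*⟪Hop A c v, w⟫_ℝ) * t + ⟪Hop A c v, v⟫_ℝ := by
      rw [inner_Hop, e1, e2, quad_expand, quad_expand, inner_Hop, inner_Hop, inner_Hop]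
      ring
    rw [hexp] at h0
    exact h0
  have hd := discrim_le_zero hquad
  rw [discrim] at hd
  nlinarith

lemma le_of_sq_le_sq {a b : ℝ} (hb : 0 ≤ b) (h : a^2 ≤ b^2) (ha : 0 ≤ a) : a ≤ b := by
  nlinarith

lemma Hop_norm_le (hc : ∀ i, 0 ≤ c i) (hc1 : ∑ i, c i ^ 2 ≤ 1) {lam : ℝ}
    (hlam : IsGreatest (spectrum ℝ (A.transpose * A)) lam) (hl : 0 < lam) (v : Blk K n) :
    ‖Hop A c v‖ ≤ 2 * lam * ‖v‖ := by
  rcases eq_or_ne (Hop A c v) 0 with h | h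
  · rw [h, norm_zero]; positivity
  · have hcs := Hop_cs (A := A) hc hc1 v (Hop A c v)
    rw [real_inner_self_eq_norm_sq] at hcs
    have h1 := Hop_self_le hlam (c := c) v
    have h2 := Hop_self_le hlam (c := c) (Hop A c v)
    have h3 := Hop_self_nonneg (A := A) hc hc1 v
    have hp : 0 < ‖Hop A c v‖ := norm_pos_iff.mpr h
    have hv : 0 ≤ ‖v‖ := norm_nonneg _
    have hq2 : 0 ≤ ⟪Hop A c (Hop A c v), Hop A c v⟫_ℝ := Hop_self_nonneg (A := A) hc hc1 _
    have h2lam : 0 ≤ 2*lam*‖v‖^2 := by positivity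
    have h4 : (‖Hop A c v‖^2)^2 ≤ (2*lam*‖v‖^2) * (2*lam*‖Hop A c v‖^2) :=
      hcs.trans (mul_le_mul h1 h2 hq2 h2lam)
    have h5 : ‖Hop A c v‖^2 ≤ (2*lam*‖v‖)^2 := by nlinarith [mul_pos hp hp]
    exact le_of_sq_le_sq (by positivity) h5 hp.le

lemma Dmap_sub (u us : Blk K n) : Dmap c (u - us) = Dmap c u - Dmap c us := by
  rw [← DL_apply, map_sub, DL_apply, DL_apply]

lemma GQ_sub_GFus (u us : Blk K n) (husD : Dmap c us = 0) :
    GQ A b c η u - GF A b c us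
      = Hop A c (u - us) + (η⁻¹/2) • DmapT c (Dmap c (u - us)) := by
  have h1 : Dmap c (u - us) = Dmap c u := by rw [Dmap_sub, husD, sub_zero]
  rw [GQ, h1, ← GF_sub]
  abel

lemma norm_DmapT_Dmap_le (hc : ∀ i, 0 ≤ c i) (hc1 : ∑ i, c i ^ 2 ≤ 1) (v : Blk K n) :
    ‖DmapT c (Dmap c v)‖ ≤ 2 * ‖v‖ := by
  have h1 := DmapT_norm_sq_le hc hc1 (Dmap c v)
  have h2 := Dmap_norm_sq_le hc hc1 v
  refine le_of_sq_le_sq (by positivity) ?_ (norm_nonneg _)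
  nlinarith [norm_nonneg (Dmap c v), norm_nonneg v]

lemma GQ_lip (hc : ∀ i, 0 ≤ c i) (hc1 : ∑ i, c i ^ 2 ≤ 1) {lam : ℝ}
    (hlam : IsGreatest (spectrum ℝ (A.transpose * A)) lam) (hl : 0 < lam)
    (hη0 : 0 < η) (h2l : 2 * lam ≤ 1/η) (u us : Blk K n) (husD : Dmap c us = 0) :
    ‖GQ A b c η u - GF A b c us‖ ≤ (2/η) * ‖u - us‖ := by
  rw [GQ_sub_GFus u us husD]
  refine (norm_add_le _ _).trans ?_
  have h1 : ‖Hop A c (u - us)‖ ≤ (1/η) * ‖u - us‖ := by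
    refine (Hop_norm_le hc hc1 hlam hl (u - us)).trans ?_
    have := norm_nonneg (u - us)
    nlinarith
  have h2 : ‖(η⁻¹/2) • DmapT c (Dmap c (u - us))‖ ≤ (1/η) * ‖u - us‖ := by
    rw [norm_smul, Real.norm_eq_abs, abs_of_nonneg (by positivity : (0:ℝ) ≤ η⁻¹/2)]
    have h3 := norm_DmapT_Dmap_le hc hc1 (u - us)
    have h4 : (0:ℝ) ≤ η⁻¹/2 := by positivity
    have := mul_le_mul_of_nonneg_left h3 h4
    refine this.trans (le_of_eq ?_)
    rw [one_div]
    ring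
  have : (2/η) * ‖u - us‖ = (1/η) * ‖u - us‖ + (1/η) * ‖u - us‖ := by ring
  rw [this]
  exact add_le_add h1 h2

lemma cs_fin {ι : Type*} [Fintype ι] (f g : ι → ℝ) :
    ∑ p, f p * g p ≤ Real.sqrt (∑ p, f p ^ 2) * Real.sqrt (∑ p, g p ^ 2) := by
  have h := Finset.sum_mul_sq_le_sq_mul_sq Finset.univ f g
  calc ∑ p, f p * g p ≤ |∑ p, f p * g p| := le_abs_self _
    _ = Real.sqrt ((∑ p, f p * g p) ^ 2) := (Real.sqrt_sq_eq_abs _).symm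
    _ ≤ Real.sqrt ((∑ p, f p ^ 2) * ∑ p, g p ^ 2) := Real.sqrt_le_sqrt h
    _ = _ := Real.sqrt_mul (Finset.sum_nonneg fun p _ => sq_nonneg _) _

lemma normsqE {q : ℕ} (y : EuclideanSpace ℝ (Fin q)) : ‖y‖ ^ 2 = ∑ j, (y j) ^ 2 := by
  rw [← real_inner_self_eq_norm_sq, PiLp.inner_apply]
  simp [RCLike.inner_apply, sq]

lemma norm_sq_coords (x : Blk K n) : ‖x‖ ^ 2 = ∑ p : Fin (K+1) × Fin n, (x p.1 p.2) ^ 2 := by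
  rw [PiLp.norm_sq_eq_of_L2, Fintype.sum_prod_type]
  exact Finset.sum_congr rfl fun i _ => normsqE (x i)

lemma inner_coords (x y : Blk K n) :
    ⟪x, y⟫_ℝ = ∑ p : Fin (K+1) × Fin n, x p.1 p.2 * y p.1 p.2 := by
  rw [PiLp.inner_apply, Fintype.sum_prod_type]
  refine Finset.sum_congr rfl fun i _ => ?_
  rw [PiLp.inner_apply]
  simp [RCLike.inner_apply, mul_comm]


lemma pt_bound {G U Us η : ℝ} (hη : -η ≤ G) (hU0 : 0 ≤ U) (hUc : U ≤ η^2) (hUs : 0 ≤ Us) :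
    G * (U - Us) ≤ η^2 * |G| + η * Us := by
  have h1 := le_abs_self G
  have h2 := abs_nonneg G
  nlinarith [mul_nonneg (sub_nonneg.mpr h1) hU0, mul_nonneg h2 (sub_nonneg.mpr hUc),
    mul_nonneg (by linarith : (0:ℝ) ≤ η + G) hUs]

end S16
set_option maxHeartbeats 1000000 in
/-- Feasibility bound for an `η`-optimal solution of the penalized problem:
`‖Du‖ ≤ 2η(2‖μ*‖ + √C)` where `(u*, μ*)` is a KKT pair and
`C = (5/2)√(Nn)‖u − u*‖ + √(Nn)‖∇F(u*)‖η + Nn η²`. -/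
theorem stmt16 {K m n : ℕ} (A : Matrix (Fin m) (Fin n) ℝ) (b : Blk K m)
    (c : Fin K → ℝ) (hc : ∀ i, 0 ≤ c i) (hc1 : ∑ i, c i ^ 2 ≤ 1)
    (hA : A ≠ 0)
    (lam : ℝ) (hlam : IsGreatest (spectrum ℝ (A.transpose * A)) lam)
    (η : ℝ) (hη0 : 0 < η) (hη : η ≤ (2 - ∑ i, c i ^ 2) / (4 * lam))
    (us : Blk K n) (μs : EuclideanSpace ℝ (Fin n))
    (hus0 : ∀ i j, 0 ≤ us i j) (husD : Dmap c us = 0)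
    (hKKT : ∀ w : Blk K n, (∀ i j, 0 ≤ w i j) →
        0 ≤ ⟪gradient (Fobj A b c) us + DmapT c μs, w - us⟫_ℝ)
    (u : Blk K n) (hu0 : ∀ i j, 0 ≤ u i j)
    (hJ : Real.sqrt (∑ i, ∑ j,
        if η ^ 2 < u i j then gradient (Qpen A b c η) u i j ^ 2 else 0) ≤ η)
    (hlb : ∀ i j, -η ≤ gradient (Qpen A b c η) u i j) :
    ‖Dmap c u‖ ≤ 2 * η * (2 * ‖μs‖ +
      Real.sqrt ((5 / 2) * Real.sqrt ((K + 1) * n) * ‖u - us‖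
        + Real.sqrt ((K + 1) * n) * ‖gradient (Fobj A b c) us‖ * η
        + (K + 1) * n * η ^ 2)) := by
  classical
  rcases Nat.eq_zero_or_pos n with hn0 | hn
  · subst hn0
    have h0 : Dmap c u = 0 := by
      ext j
      exact Fin.elim0 j
    rw [h0, norm_zero]
    have h1 : (0:ℝ) ≤ 2 * η := by positivity
    exact mul_nonneg h1 (add_nonneg (by positivity) (Real.sqrt_nonneg _))
  have hηne : η ≠ 0 := ne_of_gt hη0
  have hg : gradient (Qpen A b c η) u = S16.GQ A b c η u := S16.gradQ_eq hηne u
  have hgF : gradient (Fobj A b c) us = S16.GF A b c us := S16.gradF_eq us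
  rw [hg] at hJ hlb
  rw [hgF]
  have hl : 0 < lam := S16.lam_pos hA hlam
  have ht0 : (0:ℝ) ≤ ∑ i, c i ^ 2 := Finset.sum_nonneg fun i _ => sq_nonneg _
  have h2l : 2 * lam ≤ 1 / η := by
    have h := (le_div_iff₀ (by positivity : (0:ℝ) < 4 * lam)).mp hη
    rw [le_div_iff₀ hη0]
    nlinarith
  -- numeric abbreviations
  have hPc1 : (1:ℝ) ≤ ((K : ℝ) + 1) * n := by
    have h1 : (1:ℝ) ≤ (n : ℝ) := by exact_mod_cast hn
    have h2 : (0:ℝ) ≤ (K : ℝ) := Nat.cast_nonneg K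
    nlinarith
  have hsP1 : (1:ℝ) ≤ Real.sqrt (((K : ℝ) + 1) * n) := by
    calc (1:ℝ) = Real.sqrt 1 := Real.sqrt_one.symm
      _ ≤ _ := Real.sqrt_le_sqrt hPc1
  have hcard : ((Fintype.card (Fin (K+1) × Fin n)) : ℝ) = ((K:ℝ)+1) * n := by
    rw [Fintype.card_prod, Fintype.card_fin, Fintype.card_fin]
    push_cast
    ring
  -- step A, B, C
  have hstepA : ⟪S16.GQ A b c η u, u - us⟫_ℝ - ⟪S16.GF A b c u, u - us⟫_ℝ
      = (η⁻¹/2) * ‖Dmap c u‖^2 := by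
    have e : S16.GQ A b c η u - S16.GF A b c u = (η⁻¹/2) • DmapT c (Dmap c u) := by
      rw [S16.GQ]
      abel
    calc ⟪S16.GQ A b c η u, u - us⟫_ℝ - ⟪S16.GF A b c u, u - us⟫_ℝ
        = ⟪S16.GQ A b c η u - S16.GF A b c u, u - us⟫_ℝ := (inner_sub_left _ _ _).symm
      _ = (η⁻¹/2) * ⟪DmapT c (Dmap c u), u - us⟫_ℝ := by rw [e, real_inner_smul_left]
      _ = (η⁻¹/2) * ⟪Dmap c u, Dmap c (u - us)⟫_ℝ := by rw [S16.inner_DmapT]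
      _ = (η⁻¹/2) * ‖Dmap c u‖^2 := by
          rw [S16.Dmap_sub, husD, sub_zero, real_inner_self_eq_norm_sq]
  have hstepB : ⟪S16.GF A b c us, u - us⟫_ℝ ≤ ⟪S16.GF A b c u, u - us⟫_ℝ := by
    have h := S16.Hop_self_nonneg (A := A) hc hc1 (u - us)
    rw [← S16.GF_sub (A := A) (b := b) (c := c) u us, inner_sub_left] at h
    linarith
  have hstepC : -(‖μs‖ * ‖Dmap c u‖) ≤ ⟪S16.GF A b c us, u - us⟫_ℝ := by
    have hk := hKKT u hu0
    rw [hgF, inner_add_left] at hk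
    have h1 : ⟪DmapT c μs, u - us⟫_ℝ = ⟪μs, Dmap c u⟫_ℝ := by
      rw [S16.inner_DmapT, S16.Dmap_sub, husD, sub_zero]
    have h2 : ⟪μs, Dmap c u⟫_ℝ ≤ ‖μs‖ * ‖Dmap c u‖ := real_inner_le_norm _ _
    linarith
  -- coordinate facts
  have hJnn : (0:ℝ) ≤ ∑ i, ∑ j, (if η^2 < u i j then (S16.GQ A b c η u) i j ^ 2 else 0) := by
    refine Finset.sum_nonneg fun i _ => Finset.sum_nonneg fun j _ => ?_
    split_ifs
    exacts [sq_nonneg _, le_refl 0]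
  have hJ2 : ∑ p : Fin (K+1) × Fin n,
      (if η^2 < u p.1 p.2 then (S16.GQ A b c η u) p.1 p.2 ^ 2 else 0) ≤ η^2 := by
    rw [Fintype.sum_prod_type]
    calc (∑ i, ∑ j, if η^2 < u i j then (S16.GQ A b c η u) i j ^ 2 else 0)
        = Real.sqrt (∑ i, ∑ j, if η^2 < u i j then (S16.GQ A b c η u) i j ^ 2 else 0) ^ 2 :=
          (Real.sq_sqrt hJnn).symm
      _ ≤ η^2 := pow_le_pow_left₀ (Real.sqrt_nonneg _) hJ 2
  have hnd : ‖u - us‖^2 = ∑ p : Fin (K+1) × Fin n, ((u - us) p.1 p.2)^2 :=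
    S16.norm_sq_coords _
  have hnd' : Real.sqrt (∑ p : Fin (K+1) × Fin n, ((u - us) p.1 p.2)^2) = ‖u - us‖ := by
    rw [← hnd, Real.sqrt_sq (norm_nonneg _)]
  have hnG : ‖S16.GQ A b c η u‖^2
      = ∑ p : Fin (K+1) × Fin n, ((S16.GQ A b c η u) p.1 p.2)^2 := S16.norm_sq_coords _
  have hnG' : Real.sqrt (∑ p : Fin (K+1) × Fin n, ((S16.GQ A b c η u) p.1 p.2)^2)
      = ‖S16.GQ A b c η u‖ := by
    rw [← hnG, Real.sqrt_sq (norm_nonneg _)]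
  -- J part
  have hterm1 : (∑ p : Fin (K+1) × Fin n,
      if η^2 < u p.1 p.2 then (S16.GQ A b c η u) p.1 p.2 * (u - us) p.1 p.2 else 0)
      ≤ η * ‖u - us‖ := by
    have e : ∀ p : Fin (K+1) × Fin n,
        (if η^2 < u p.1 p.2 then (S16.GQ A b c η u) p.1 p.2 * (u - us) p.1 p.2 else 0)
        = (if η^2 < u p.1 p.2 then (S16.GQ A b c η u) p.1 p.2 else 0) * (u - us) p.1 p.2 := by
      intro p
      split_ifs <;> simp
    rw [Finset.sum_congr rfl fun p _ => e p]
    refine (S16.cs_fin _ _).trans ?_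
    have e2 : ∑ p : Fin (K+1) × Fin n,
        (if η^2 < u p.1 p.2 then (S16.GQ A b c η u) p.1 p.2 else 0)^2
        = ∑ p : Fin (K+1) × Fin n,
        (if η^2 < u p.1 p.2 then (S16.GQ A b c η u) p.1 p.2 ^ 2 else 0) := by
      refine Finset.sum_congr rfl fun p _ => ?_
      split_ifs <;> simp
    rw [e2, hnd']
    refine mul_le_mul_of_nonneg_right ?_ (norm_nonneg _)
    calc Real.sqrt _ ≤ Real.sqrt (η^2) := Real.sqrt_le_sqrt hJ2
      _ = η := Real.sqrt_sq hη0.le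
  -- complement part, pointwise
  have hpt : ∀ p : Fin (K+1) × Fin n,
      (if η^2 < u p.1 p.2 then 0 else (S16.GQ A b c η u) p.1 p.2 * (u - us) p.1 p.2)
      ≤ η^2 * |(S16.GQ A b c η u) p.1 p.2|
        + η * (if η^2 < u p.1 p.2 then 0 else us p.1 p.2) := by
    intro p
    split_ifs with hcnd
    · have := abs_nonneg ((S16.GQ A b c η u) p.1 p.2)
      positivity
    · have hucap : u p.1 p.2 ≤ η^2 := le_of_not_gt hcnd
      have hu' := hu0 p.1 p.2
      have hus' := hus0 p.1 p.2
      have hlb' := hlb p.1 p.2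
      have hsubp : (u - us) p.1 p.2 = u p.1 p.2 - us p.1 p.2 := by
        rw [PiLp.sub_apply, PiLp.sub_apply]
      rw [hsubp]
      exact S16.pt_bound hlb' hu' hucap hus'
  have habsG : ∑ p : Fin (K+1) × Fin n, |(S16.GQ A b c η u) p.1 p.2|
      ≤ Real.sqrt (((K:ℝ)+1) * n) * ‖S16.GQ A b c η u‖ := by
    have e : ∀ p : Fin (K+1) × Fin n, |(S16.GQ A b c η u) p.1 p.2|
        = 1 * |(S16.GQ A b c η u) p.1 p.2| := fun p => (one_mul _).symm
    rw [Finset.sum_congr rfl fun p _ => e p]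
    refine (S16.cs_fin _ _).trans ?_
    have e1 : ∑ p : Fin (K+1) × Fin n, (1:ℝ)^2 = ((K:ℝ)+1) * n := by
      rw [Finset.sum_const, Finset.card_univ]
      rw [nsmul_eq_mul, ← hcard]
      ring
    have e2 : ∑ p : Fin (K+1) × Fin n, |(S16.GQ A b c η u) p.1 p.2|^2
        = ∑ p : Fin (K+1) × Fin n, ((S16.GQ A b c η u) p.1 p.2)^2 := by
      refine Finset.sum_congr rfl fun p _ => sq_abs _
    rw [e1, e2, hnG']
  have habsD : ∑ p : Fin (K+1) × Fin n, |(u - us) p.1 p.2|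
      ≤ Real.sqrt (((K:ℝ)+1) * n) * ‖u - us‖ := by
    have e : ∀ p : Fin (K+1) × Fin n, |(u - us) p.1 p.2|
        = 1 * |(u - us) p.1 p.2| := fun p => (one_mul _).symm
    rw [Finset.sum_congr rfl fun p _ => e p]
    refine (S16.cs_fin _ _).trans ?_
    have e1 : ∑ p : Fin (K+1) × Fin n, (1:ℝ)^2 = ((K:ℝ)+1) * n := by
      rw [Finset.sum_const, Finset.card_univ]
      rw [nsmul_eq_mul, ← hcard]
      ring
    have e2 : ∑ p : Fin (K+1) × Fin n, |(u - us) p.1 p.2|^2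
        = ∑ p : Fin (K+1) × Fin n, ((u - us) p.1 p.2)^2 := by
      refine Finset.sum_congr rfl fun p _ => sq_abs _
    rw [e1, e2, hnd']
  have husB : ∑ p : Fin (K+1) × Fin n, (if η^2 < u p.1 p.2 then 0 else us p.1 p.2)
      ≤ ((K:ℝ)+1) * n * η^2 + Real.sqrt (((K:ℝ)+1) * n) * ‖u - us‖ := by
    have h1 : ∀ p : Fin (K+1) × Fin n, (if η^2 < u p.1 p.2 then 0 else us p.1 p.2)
        ≤ (if η^2 < u p.1 p.2 then 0 else u p.1 p.2) + |(u - us) p.1 p.2| := by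
      intro p
      have hsubp : (u - us) p.1 p.2 = u p.1 p.2 - us p.1 p.2 := by
        rw [PiLp.sub_apply, PiLp.sub_apply]
      split_ifs
      · positivity
      · rw [hsubp]
        have := neg_abs_le (u p.1 p.2 - us p.1 p.2)
        linarith
    have h2 : ∀ p : Fin (K+1) × Fin n, (if η^2 < u p.1 p.2 then 0 else u p.1 p.2) ≤ η^2 := by
      intro p
      split_ifs with hcnd
      · positivity
      · exact le_of_not_gt hcnd
    calc ∑ p : Fin (K+1) × Fin n, (if η^2 < u p.1 p.2 then 0 else us p.1 p.2)
        ≤ ∑ p : Fin (K+1) × Fin n,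
            ((if η^2 < u p.1 p.2 then 0 else u p.1 p.2) + |(u - us) p.1 p.2|) :=
          Finset.sum_le_sum fun p _ => h1 p
      _ = (∑ p : Fin (K+1) × Fin n, (if η^2 < u p.1 p.2 then 0 else u p.1 p.2))
            + ∑ p : Fin (K+1) × Fin n, |(u - us) p.1 p.2| := Finset.sum_add_distrib
      _ ≤ (∑ p : Fin (K+1) × Fin n, η^2)
            + Real.sqrt (((K:ℝ)+1) * n) * ‖u - us‖ := by
          exact add_le_add (Finset.sum_le_sum fun p _ => h2 p) habsD
      _ = ((K:ℝ)+1) * n * η^2 + Real.sqrt (((K:ℝ)+1) * n) * ‖u - us‖ := by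
          rw [Finset.sum_const, Finset.card_univ, nsmul_eq_mul, ← hcard]
  -- Lipschitz bound on the gradient
  have hlip : ‖S16.GQ A b c η u‖ ≤ ‖S16.GF A b c us‖ + (2/η) * ‖u - us‖ := by
    have h := S16.GQ_lip (A := A) (b := b) hc hc1 hlam hl hη0 h2l u us husD
    calc ‖S16.GQ A b c η u‖
        = ‖S16.GF A b c us + (S16.GQ A b c η u - S16.GF A b c us)‖ := by
          rw [add_sub_cancel]
      _ ≤ ‖S16.GF A b c us‖ + ‖S16.GQ A b c η u - S16.GF A b c us‖ := norm_add_le _ _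
      _ ≤ ‖S16.GF A b c us‖ + (2/η) * ‖u - us‖ := by linarith
  -- inner product bound
  have hsplit : ⟪S16.GQ A b c η u, u - us⟫_ℝ
      = (∑ p : Fin (K+1) × Fin n,
          if η^2 < u p.1 p.2 then (S16.GQ A b c η u) p.1 p.2 * (u - us) p.1 p.2 else 0)
        + ∑ p : Fin (K+1) × Fin n,
          (if η^2 < u p.1 p.2 then 0 else (S16.GQ A b c η u) p.1 p.2 * (u - us) p.1 p.2) := by
    rw [S16.inner_coords, ← Finset.sum_add_distrib]
    refine Finset.sum_congr rfl fun p _ => ?_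
    split_ifs <;> ring
  have hterm2 : (∑ p : Fin (K+1) × Fin n,
      (if η^2 < u p.1 p.2 then 0 else (S16.GQ A b c η u) p.1 p.2 * (u - us) p.1 p.2))
      ≤ η^2 * (Real.sqrt (((K:ℝ)+1) * n) * ‖S16.GQ A b c η u‖)
        + η * (((K:ℝ)+1) * n * η^2 + Real.sqrt (((K:ℝ)+1) * n) * ‖u - us‖) := by
    calc (∑ p : Fin (K+1) × Fin n,
        (if η^2 < u p.1 p.2 then 0 else (S16.GQ A b c η u) p.1 p.2 * (u - us) p.1 p.2))
        ≤ ∑ p : Fin (K+1) × Fin n, (η^2 * |(S16.GQ A b c η u) p.1 p.2|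
            + η * (if η^2 < u p.1 p.2 then 0 else us p.1 p.2)) :=
          Finset.sum_le_sum fun p _ => hpt p
      _ = η^2 * (∑ p : Fin (K+1) × Fin n, |(S16.GQ A b c η u) p.1 p.2|)
            + η * ∑ p : Fin (K+1) × Fin n, (if η^2 < u p.1 p.2 then 0 else us p.1 p.2) := by
          rw [Finset.sum_add_distrib, Finset.mul_sum, Finset.mul_sum]
      _ ≤ _ := by
          refine add_le_add ?_ ?_
          · exact mul_le_mul_of_nonneg_left habsG (by positivity)
          · exact mul_le_mul_of_nonneg_left husB hη0.le
  -- gather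
  have hC0 : (0:ℝ) ≤ 5 / 2 * Real.sqrt (((K:ℝ) + 1) * n) * ‖u - us‖
      + Real.sqrt (((K:ℝ) + 1) * n) * ‖S16.GF A b c us‖ * η + ((K:ℝ) + 1) * n * η ^ 2 := by
    have h1 := Real.sqrt_nonneg (((K:ℝ)+1) * n)
    have h2 := norm_nonneg (u - us)
    have h3 := norm_nonneg (S16.GF A b c us)
    have h4 : (0:ℝ) ≤ ((K:ℝ) + 1) * n := le_trans zero_le_one hPc1
    refine add_nonneg (add_nonneg ?_ ?_) ?_
    · exact mul_nonneg (mul_nonneg (by norm_num) h1) h2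
    · exact mul_nonneg (mul_nonneg h1 h3) hη0.le
    · exact mul_nonneg h4 (sq_nonneg η)
  have hfe : η^2 * (2/η) = 2 * η := by
    field_simp
  have hTb : ⟪S16.GQ A b c η u, u - us⟫_ℝ
      ≤ 2 * η * (5 / 2 * Real.sqrt (((K:ℝ) + 1) * n) * ‖u - us‖
        + Real.sqrt (((K:ℝ) + 1) * n) * ‖S16.GF A b c us‖ * η
        + ((K:ℝ) + 1) * n * η ^ 2) := by
    rw [hsplit]
    have hGb : η^2 * (Real.sqrt (((K:ℝ)+1) * n) * ‖S16.GQ A b c η u‖)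
        ≤ η^2 * Real.sqrt (((K:ℝ)+1) * n) * ‖S16.GF A b c us‖
          + 2 * η * Real.sqrt (((K:ℝ)+1) * n) * ‖u - us‖ := by
      have h1 : η^2 * (Real.sqrt (((K:ℝ)+1) * n) * ‖S16.GQ A b c η u‖)
          ≤ η^2 * (Real.sqrt (((K:ℝ)+1) * n) * (‖S16.GF A b c us‖ + (2/η) * ‖u - us‖)) := by
        refine mul_le_mul_of_nonneg_left ?_ (sq_nonneg η)
        exact mul_le_mul_of_nonneg_left hlip (Real.sqrt_nonneg _)
      refine h1.trans (le_of_eq ?_)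
      have h2 : η^2 * (Real.sqrt (((K:ℝ)+1) * n) * ((2/η) * ‖u - us‖))
          = 2 * η * Real.sqrt (((K:ℝ)+1) * n) * ‖u - us‖ := by
        rw [show η^2 * (Real.sqrt (((K:ℝ)+1) * n) * ((2/η) * ‖u - us‖))
            = (η^2 * (2/η)) * (Real.sqrt (((K:ℝ)+1) * n) * ‖u - us‖) from by ring, hfe]
        ring
      linear_combination h2
    have hd0 : (0:ℝ) ≤ ‖u - us‖ := norm_nonneg _
    have hsp0 : (0:ℝ) ≤ Real.sqrt (((K:ℝ)+1) * n) := Real.sqrt_nonneg _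
    linarith [hterm1, hterm2, hGb,
      mul_nonneg (mul_nonneg hη0.le hd0) (sub_nonneg.mpr hsP1),
      mul_nonneg (mul_nonneg hη0.le hsp0) hd0,
      mul_nonneg (mul_nonneg (sq_nonneg η) hsp0) (norm_nonneg (S16.GF A b c us)),
      mul_nonneg (le_trans zero_le_one hPc1) (mul_nonneg (mul_nonneg hη0.le hη0.le) hη0.le)]
  -- energy inequality
  have hkey : ‖Dmap c u‖^2 ≤ 2 * η * ⟪S16.GQ A b c η u, u - us⟫_ℝ
      + 2 * η * (‖μs‖ * ‖Dmap c u‖) := by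
    have h1 : (η⁻¹/2) * ‖Dmap c u‖^2 ≤ ⟪S16.GQ A b c η u, u - us⟫_ℝ + ‖μs‖ * ‖Dmap c u‖ := by
      linarith [hstepA, hstepB, hstepC]
    have h2 : 2 * η * ((η⁻¹/2) * ‖Dmap c u‖^2) = ‖Dmap c u‖^2 := by
      field_simp
    linarith [mul_le_mul_of_nonneg_left h1 (by positivity : (0:ℝ) ≤ 2 * η), h2]
  -- final quadratic argument
  have hC2 : ‖Dmap c u‖^2 ≤ 4 * η^2 * (5 / 2 * Real.sqrt (((K:ℝ) + 1) * n) * ‖u - us‖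
      + Real.sqrt (((K:ℝ) + 1) * n) * ‖S16.GF A b c us‖ * η + ((K:ℝ) + 1) * n * η ^ 2)
      + 2 * η * (‖μs‖ * ‖Dmap c u‖) := by
    linarith [hkey, mul_le_mul_of_nonneg_left hTb (by positivity : (0:ℝ) ≤ 2 * η)]
  have hs := Real.sq_sqrt hC0
  have hsnn := Real.sqrt_nonneg (5 / 2 * Real.sqrt (((K:ℝ) + 1) * n) * ‖u - us‖
      + Real.sqrt (((K:ℝ) + 1) * n) * ‖S16.GF A b c us‖ * η + ((K:ℝ) + 1) * n * η ^ 2)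
  rw [← hs] at hC2
  have hx0 : (0:ℝ) ≤ ‖Dmap c u‖ := norm_nonneg _
  have hM0 : (0:ℝ) ≤ ‖μs‖ := norm_nonneg _
  by_contra hcon
  push_neg at hcon
  set Sv : ℝ := Real.sqrt (5 / 2 * Real.sqrt (((K:ℝ) + 1) * n) * ‖u - us‖
      + Real.sqrt (((K:ℝ) + 1) * n) * ‖S16.GF A b c us‖ * η + ((K:ℝ) + 1) * n * η ^ 2) with hSv
  have hrhs0 : (0:ℝ) ≤ 2 * η * (2 * ‖μs‖ + Sv) :=
    mul_nonneg (mul_nonneg (by norm_num) hη0.le) (by linarith only [hM0, hsnn])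
  have hx : (0:ℝ) < ‖Dmap c u‖ := lt_of_le_of_lt hrhs0 hcon
  have hXlt : (4*η*‖μs‖ + 2*η*Sv) * ‖Dmap c u‖ < ‖Dmap c u‖ * ‖Dmap c u‖ := by
    have h1 : 4*η*‖μs‖ + 2*η*Sv < ‖Dmap c u‖ := by linarith only [hcon]
    exact mul_lt_mul_of_pos_right h1 hx
  have h5 : 2*η*Sv*‖Dmap c u‖ < 4*η^2*Sv^2 := by
    have h2ηMx : (0:ℝ) ≤ 2*η*(‖μs‖*‖Dmap c u‖) :=
      mul_nonneg (by linarith : (0:ℝ) ≤ 2*η) (mul_nonneg hM0 hx0)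
    nlinarith only [hC2, hXlt, h2ηMx, hSv]
  have h6 : 2*η*Sv < ‖Dmap c u‖ := by
    have h4M : (0:ℝ) ≤ 4*η*‖μs‖ := by
      have := mul_nonneg hη0.le hM0
      linarith only [this]
    linarith only [hXlt, hx, h4M, hcon, mul_pos hx hx]
  have hy : (0:ℝ) ≤ 2*η*Sv := mul_nonneg (by linarith : (0:ℝ) ≤ 2*η) hsnn
  nlinarith only [h5, h6, hy]
end
end
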